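/- arXiv:2303.16284 — 6 statements merged into one kernel-verified Lean document; each statement's English description precedes it below -/
import Mathlib

section
/- Let D ≥ 1 and let ξ : ℝ^{D×D} → ℝ be Fréchet differentiable, satisfy ξ(a) = ξ(aᵀ) for every real D×D matrix a, and satisfy ξ(a) ≥ ξ(b) whenever a and b are symmetric positive semidefinite real D×D matrices such that a − b is positive semidefinite. Then for every symmetric positive semidefinite real D×D matrix a, the gradient ∇ξ(a) is symmetric positive semidefinite. -/
open Matrix

attribute [local instance] Matrix.normedAddCommGroup Matrix.normedSpace

private lemma psd_smul {D : ℕ} {h : Matrix (Fin D) (Fin D) ℝ} (hh : h.PosSemidef)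
    {t : ℝ} (ht : 0 ≤ t) : (t • h).PosSemidef := by
  refine Matrix.PosSemidef.of_dotProduct_mulVec_nonneg ?_ ?_
  · ext i j
    have := congrFun (congrFun hh.1 i) j
    simpa [conjTranspose_apply] using congrArg (t * ·) this
  · intro y
    have : star y ⬝ᵥ (t • h) *ᵥ y = t * (star y ⬝ᵥ h *ᵥ y) := by
      simp [smul_mulVec, dotProduct_smul]
    rw [this]
    exact mul_nonneg ht (hh.dotProduct_mulVec_nonneg y)

private lemma psd_outer {D : ℕ} (x : Fin D → ℝ) : (vecMulVec x x).PosSemidef := by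
  refine Matrix.PosSemidef.of_dotProduct_mulVec_nonneg ?_ ?_
  · ext i j; simp [vecMulVec_apply, conjTranspose_apply, mul_comm]
  · intro y
    have : star y ⬝ᵥ (vecMulVec x x) *ᵥ y = (x ⬝ᵥ y) * (x ⬝ᵥ y) := by
      simp [dotProduct, Matrix.mulVec, vecMulVec_apply, Finset.mul_sum, Finset.sum_mul]
      congr 1; ext i; congr 1; ext j; ring
    rw [this]; exact mul_self_nonneg _

/-- If `ξ : ℝ^{D×D} → ℝ` is Fréchet differentiable, satisfies `ξ(a) = ξ(aᵀ)`,
and is monotone on positive semidefinite matrices in the sense that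
`ξ(a) ≥ ξ(b)` whenever `a, b` are PSD with `a - b` PSD, then at every symmetric
positive semidefinite matrix `a` the gradient of `ξ` with respect to the
Frobenius inner product is symmetric positive semidefinite. -/
theorem gradient_posSemidef (D : ℕ) (hD : 1 ≤ D)
    (ξ : Matrix (Fin D) (Fin D) ℝ → ℝ)
    (hdiff : Differentiable ℝ ξ)
    (hsym : ∀ a : Matrix (Fin D) (Fin D) ℝ, ξ a = ξ aᵀ)
    (hmono : ∀ a b : Matrix (Fin D) (Fin D) ℝ,
      a.PosSemidef → b.PosSemidef → (a - b).PosSemidef → ξ b ≤ ξ a)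
    (a : Matrix (Fin D) (Fin D) ℝ) (ha : a.PosSemidef)
    (g : Matrix (Fin D) (Fin D) ℝ)
    (hg : ∀ v : Matrix (Fin D) (Fin D) ℝ, fderiv ℝ ξ a v = (g * vᵀ).trace) :
    g.PosSemidef := by
  classical
  have haa : aᵀ = a := ha.1
  -- transpose as a continuous linear map
  let T : Matrix (Fin D) (Fin D) ℝ →L[ℝ] Matrix (Fin D) (Fin D) ℝ :=
    LinearMap.toContinuousLinearMap
      ((Matrix.transposeLinearEquiv (Fin D) (Fin D) ℝ ℝ).toLinearMap)
  have hT : ∀ v : Matrix (Fin D) (Fin D) ℝ, T v = vᵀ := fun v => rfl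
  -- the derivative is invariant under transpose of the direction
  have hfd : ∀ v : Matrix (Fin D) (Fin D) ℝ, fderiv ℝ ξ a v = fderiv ℝ ξ a vᵀ := by
    intro v
    have h2 : HasFDerivAt (fun m => ξ (T m)) ((fderiv ℝ ξ (T a)).comp T) a :=
      (hdiff (T a)).hasFDerivAt.comp a T.hasFDerivAt
    have h3 : (fun m => ξ (T m)) = ξ := funext fun m => by
      rw [hT]; exact (hsym m).symm
    rw [h3] at h2
    have h4 : fderiv ℝ ξ a = (fderiv ℝ ξ (T a)).comp T := h2.fderiv
    have h5 : T a = a := by rw [hT, haa]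
    rw [h5] at h4
    calc fderiv ℝ ξ a v = ((fderiv ℝ ξ a).comp T) v := by rw [← h4]
      _ = fderiv ℝ ξ a vᵀ := by rw [ContinuousLinearMap.comp_apply, hT]
  -- hence the "gradient pairing" is transpose-invariant
  have htr : ∀ v : Matrix (Fin D) (Fin D) ℝ, (g * vᵀ).trace = (g * v).trace := by
    intro v
    have := hfd v
    rw [hg v, hg vᵀ, transpose_transpose] at this
    exact this
  -- symmetry of g
  have hherm : g.IsHermitian := by
    ext i j
    have := htr (Matrix.single i j (1:ℝ))
    have h1 : (g * (Matrix.single i j (1:ℝ))ᵀ).trace = g i j := by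
      simp [Matrix.trace, Matrix.mul_apply, Matrix.diag, Matrix.single, Matrix.transpose_apply,
        ite_and, Finset.sum_ite_eq, Finset.sum_ite_eq']
    have h2 : (g * (Matrix.single i j (1:ℝ))).trace = g j i := by
      simp [Matrix.trace, Matrix.mul_apply, Matrix.diag, Matrix.single,
        ite_and, Finset.sum_ite_eq, Finset.sum_ite_eq']
    rw [h1, h2] at this
    simpa [conjTranspose_apply] using this.symm
  refine Matrix.PosSemidef.of_dotProduct_mulVec_nonneg hherm fun x => ?_
  -- positivity along outer products
  set h : Matrix (Fin D) (Fin D) ℝ := vecMulVec x x with hh_def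
  have hpsd : h.PosSemidef := psd_outer x
  set φ : ℝ → ℝ := fun t => ξ (a + t • h) with hφ_def
  have hc : HasDerivAt (fun t : ℝ => a + t • h) h 0 := by
    have := ((hasDerivAt_id (0:ℝ)).smul_const h).const_add a
    rw [one_smul] at this
    exact this
  have hφ : HasDerivAt φ (fderiv ℝ ξ a h) 0 := by
    have := (hdiff (a + (0:ℝ) • h)).hasFDerivAt.comp_hasDerivAt 0 hc
    rw [zero_smul, add_zero] at this
    exact this
  have hmon : ∀ t : ℝ, 0 ≤ t → φ 0 ≤ φ t := by
    intro t ht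
    have h1 : (a + t • h).PosSemidef := ha.add (psd_smul hpsd ht)
    have h2 : ((a + t • h) - a).PosSemidef := by
      simpa using psd_smul hpsd ht
    have := hmono (a + t • h) a h1 ha h2
    simpa [hφ_def] using this
  have key : 0 ≤ fderiv ℝ ξ a h := by
    have hs := hφ
    rw [hasDerivAt_iff_tendsto_slope] at hs
    have hs' : Filter.Tendsto (slope φ 0) (nhdsWithin 0 (Set.Ioi 0))
        (nhds (fderiv ℝ ξ a h)) :=
      hs.mono_left (nhdsWithin_mono _ fun t ht => ht.ne')
    refine ge_of_tendsto hs' ?_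
    filter_upwards [self_mem_nhdsWithin] with t ht
    have ht' : (0:ℝ) < t := ht
    rw [slope_def_field, sub_zero]
    exact div_nonneg (sub_nonneg.2 (hmon t ht'.le)) ht'.le
  have hval : fderiv ℝ ξ a h = x ⬝ᵥ g *ᵥ x := by
    rw [hg h, hh_def]
    simp [Matrix.trace, Matrix.mul_apply, Matrix.vecMulVec_apply, dotProduct, Matrix.mulVec,
      Matrix.diag, Finset.mul_sum, Finset.sum_mul]
    congr 1; ext i; congr 1; ext j; ring
  rw [hval] at key
  simpa using key
end

section
/- Let D ≥ 1 and let ξ : ℝ^{D×D} → ℝ be Fréchet differentiable and convex, with ξ(0) = 0. Assume that whenever a and b are symmetric positive semidefinite real D×D matrices such that a − b is positive semidefinite, one has ξ(a) ≥ ξ(b) and (∇ξ(a) − ∇ξ(b))·c ≥ 0 for every symmetric positive semidefinite real D×D matrix c. Define θ(a) = a·∇ξ(a) − ξ(a). Then for all symmetric positive semidefinite real D×D matrices a and b such that a − b is positive semidefinite: θ(a) ≥ θ(b) and θ(b) ≥ 0. -/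
open Matrix

attribute [local instance] Matrix.normedAddCommGroup Matrix.normedSpace

/-- Gradient inequality for a convex differentiable function on a normed space. -/
lemma grad_ineq {E : Type*} [NormedAddCommGroup E] [NormedSpace ℝ E]
    {f : E → ℝ} (hdiff : Differentiable ℝ f) (hconv : ConvexOn ℝ Set.univ f)
    (x y : E) : fderiv ℝ f x (y - x) ≤ f y - f x := by
  set g : ℝ → ℝ := fun t => f (x + t • (y - x)) with hg
  have hline : ∀ t : ℝ, (AffineMap.lineMap x y : ℝ →ᵃ[ℝ] E) t = x + t • (y - x) := by
    intro t; simp [AffineMap.lineMap_apply, vadd_eq_add, add_comm]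
  have hgc : ConvexOn ℝ Set.univ g := by
    have := hconv.comp_affineMap (AffineMap.lineMap x y : ℝ →ᵃ[ℝ] E)
    have heq : (f ∘ (AffineMap.lineMap x y : ℝ →ᵃ[ℝ] E)) = g := by
      funext t; simp [Function.comp, hline t, hg]
    rw [heq] at this
    simpa using this
  have hd : HasDerivAt g (fderiv ℝ f x (y - x)) 0 := by
    have h1 : HasDerivAt (fun t : ℝ => x + t • (y - x)) (y - x) 0 := by
      simpa using ((hasDerivAt_id (0 : ℝ)).smul_const (y - x)).const_add x
    have h2 : HasFDerivAt f (fderiv ℝ f (x + (0:ℝ) • (y - x))) (x + (0:ℝ) • (y - x)) :=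
      (hdiff _).hasFDerivAt
    have := h2.comp_hasDerivAt 0 h1
    simp only [zero_smul, add_zero] at this
    exact this
  have hs : fderiv ℝ f x (y - x) ≤ slope g 0 1 := by
    have := hgc.le_slope_of_hasDerivAt (Set.mem_univ (0:ℝ)) (Set.mem_univ (1:ℝ))
      one_pos hd
    simpa using this
  have : slope g 0 1 = f y - f x := by
    simp [slope_def_field, hg]
  linarith [hs, this.le, this.ge]

/-- Let `ξ : ℝ^{D×D} → ℝ` be Fréchet differentiable and convex with `ξ(0) = 0`,
with gradient `Dξ` with respect to the Frobenius inner product. Assume that for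
all PSD `a, b` with `a - b` PSD one has `ξ(a) ≥ ξ(b)` and
`(∇ξ(a) - ∇ξ(b))·c ≥ 0` for every PSD `c`. Then `θ(a) := a·∇ξ(a) - ξ(a)`
satisfies `θ(a) ≥ θ(b) ≥ 0` for all PSD `a, b` with `a - b` PSD. -/
theorem theta_monotone_nonneg (D : ℕ) (hD : 1 ≤ D)
    (ξ : Matrix (Fin D) (Fin D) ℝ → ℝ)
    (Dξ : Matrix (Fin D) (Fin D) ℝ → Matrix (Fin D) (Fin D) ℝ)
    (hdiff : Differentiable ℝ ξ)
    (hgrad : ∀ a v : Matrix (Fin D) (Fin D) ℝ, fderiv ℝ ξ a v = (Dξ a * vᵀ).trace)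
    (hconv : ConvexOn ℝ Set.univ ξ)
    (h0 : ξ 0 = 0)
    (hmono : ∀ a b : Matrix (Fin D) (Fin D) ℝ,
      a.PosSemidef → b.PosSemidef → (a - b).PosSemidef →
        ξ b ≤ ξ a ∧ ∀ c : Matrix (Fin D) (Fin D) ℝ, c.PosSemidef →
          0 ≤ ((Dξ a - Dξ b) * cᵀ).trace) :
    ∀ a b : Matrix (Fin D) (Fin D) ℝ,
      a.PosSemidef → b.PosSemidef → (a - b).PosSemidef →
        ((b * (Dξ b)ᵀ).trace - ξ b ≤ (a * (Dξ a)ᵀ).trace - ξ a)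
        ∧ 0 ≤ (b * (Dξ b)ᵀ).trace - ξ b := by
  intro a b ha hb hab
  -- trace symmetry: (m * nᵀ).trace = (n * mᵀ).trace
  have tsym : ∀ m n : Matrix (Fin D) (Fin D) ℝ, (m * nᵀ).trace = (n * mᵀ).trace := by
    intro m n
    rw [← Matrix.trace_transpose (m * nᵀ), Matrix.transpose_mul, Matrix.transpose_transpose,
      Matrix.trace_mul_comm]
  -- nonnegativity: from gradient inequality at b toward 0
  have h1 : fderiv ℝ ξ b (0 - b) ≤ ξ 0 - ξ b := grad_ineq hdiff hconv b 0
  have h1' : -(Dξ b * bᵀ).trace ≤ -ξ b := by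
    rw [hgrad] at h1
    simp only [zero_sub, Matrix.transpose_neg, Matrix.mul_neg, Matrix.trace_neg, h0] at h1
    linarith
  have hnn : 0 ≤ (b * (Dξ b)ᵀ).trace - ξ b := by
    rw [tsym]; linarith
  -- monotonicity
  have h2 : fderiv ℝ ξ a (b - a) ≤ ξ b - ξ a := grad_ineq hdiff hconv a b
  have h2' : (Dξ a * bᵀ).trace - (Dξ a * aᵀ).trace ≤ ξ b - ξ a := by
    rw [hgrad] at h2
    simpa [Matrix.transpose_sub, Matrix.mul_sub, Matrix.trace_sub] using h2
  have h3 : 0 ≤ ((Dξ a - Dξ b) * bᵀ).trace := (hmono a b ha hb hab).2 b hb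
  have h3' : (Dξ b * bᵀ).trace ≤ (Dξ a * bᵀ).trace := by
    rw [Matrix.sub_mul, Matrix.trace_sub] at h3
    linarith
  constructor
  · rw [tsym b, tsym a]; linarith
  · exact hnn
end

section
/- Let E be a finite-dimensional real inner product space, let x₀ ∈ E, and let F, G : E → ℝ with G convex and differentiable and F differentiable at x₀. Suppose there are constants C > 0, r > 0 and δ ≥ 0 such that for every y ∈ E with ‖y‖ ≤ r one has 0 ≤ F(x₀ + y) − F(x₀) − ⟪∇F(x₀), y⟫ ≤ C‖y‖² and |G(x₀ + y) − F(x₀ + y)| ≤ δ. Then for every λ ∈ (0, r]: λ ‖∇G(x₀) − ∇F(x₀)‖ ≤ 2δ + Cλ². -/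
open scoped RealInnerProductSpace

/-- Let `G` be convex and differentiable and `F` differentiable at `x₀` on a
finite-dimensional real inner product space. If for all `‖y‖ ≤ r` one has
`0 ≤ F(x₀+y) − F(x₀) − ⟪∇F(x₀), y⟫ ≤ C‖y‖²` and `|G(x₀+y) − F(x₀+y)| ≤ δ`,
then for every `λ ∈ (0, r]`: `λ‖∇G(x₀) − ∇F(x₀)‖ ≤ 2δ + Cλ²`. -/
theorem gradient_difference_bound {E : Type*} [NormedAddCommGroup E]
    [InnerProductSpace ℝ E] [FiniteDimensional ℝ E]
    (F G : E → ℝ) (x₀ : E)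
    (hGconv : ConvexOn ℝ Set.univ G)
    (hGdiff : Differentiable ℝ G)
    (hFdiff : DifferentiableAt ℝ F x₀)
    (C r δ : ℝ) (hC : 0 < C) (hr : 0 < r) (hδ : 0 ≤ δ)
    (hquad : ∀ y : E, ‖y‖ ≤ r →
      0 ≤ F (x₀ + y) - F x₀ - ⟪gradient F x₀, y⟫
      ∧ F (x₀ + y) - F x₀ - ⟪gradient F x₀, y⟫ ≤ C * ‖y‖ ^ 2)
    (hclose : ∀ y : E, ‖y‖ ≤ r → |G (x₀ + y) - F (x₀ + y)| ≤ δ) :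
    ∀ lam : ℝ, 0 < lam → lam ≤ r →
      lam * ‖gradient G x₀ - gradient F x₀‖ ≤ 2 * δ + C * lam ^ 2 := by
  intro lam hlam hlamr
  set v : E := gradient G x₀ - gradient F x₀ with hv
  by_cases hv0 : v = 0
  · rw [hv0]
    simp only [norm_zero, mul_zero]
    positivity
  have hnv : (0:ℝ) < ‖v‖ := norm_pos_iff.mpr hv0
  set u : E := ‖v‖⁻¹ • v with hu
  have hun : ‖u‖ = 1 := by
    rw [hu, norm_smul, norm_inv, norm_norm, inv_mul_cancel₀ hnv.ne']
  set y : E := lam • u with hy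
  have hyn : ‖y‖ = lam := by
    rw [hy, norm_smul, hun, mul_one, Real.norm_eq_abs, abs_of_pos hlam]
  have hyr : ‖y‖ ≤ r := by rw [hyn]; exact hlamr
  -- convexity inequality for G along the line
  have key : lam * ⟪gradient G x₀, u⟫ ≤ G (x₀ + y) - G x₀ := by
    set g : ℝ → ℝ := fun t => G (x₀ + t • u) with hg
    have hgconv : ConvexOn ℝ Set.univ g := by
      have := hGconv.comp_affineMap (AffineMap.lineMap x₀ (x₀ + u))
      have heq : g = G ∘ (AffineMap.lineMap x₀ (x₀ + u)) := by
        funext t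
        simp [hg, AffineMap.lineMap_apply, add_comm]
      rw [heq]
      simpa using this
    have hline : HasDerivAt (fun t : ℝ => x₀ + t • u) u 0 := by
      simpa using ((hasDerivAt_id (0:ℝ)).smul_const u).const_add x₀
    have hgd : HasDerivAt g ⟪gradient G x₀, u⟫ 0 := by
      have hG : HasGradientAt G (gradient G x₀) x₀ := (hGdiff x₀).hasGradientAt
      have hF : HasFDerivAt G (InnerProductSpace.toDual ℝ E (gradient G x₀)) x₀ :=
        hG.hasFDerivAt
      have hF' : HasFDerivAt G ((InnerProductSpace.toDual ℝ E) (gradient G x₀)) (x₀ + (0:ℝ) • u) := by simpa using hF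
      have := hF'.comp_hasDerivAt (0:ℝ) hline
      rw [InnerProductSpace.toDual_apply_apply] at this; exact this
    have := hgconv.le_slope_of_hasDerivAt (Set.mem_univ 0) (Set.mem_univ lam) hlam hgd
    rw [slope_def_field, sub_zero] at this
    have h2 : lam * ⟪gradient G x₀, u⟫ ≤ lam * ((g lam - g 0) / lam) :=
      mul_le_mul_of_nonneg_left this hlam.le
    rw [mul_div_cancel₀ _ hlam.ne'] at h2
    simpa [hg, hy] using h2
  have h1 : G (x₀ + y) ≤ F (x₀ + y) + δ := by
    have := hclose y hyr
    linarith [abs_le.mp this |>.2]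
  have h0 : F x₀ - δ ≤ G x₀ := by
    have := hclose 0 (by simpa using hr.le)
    rw [abs_le] at this
    simp only [add_zero] at this
    linarith [this.1]
  have h2 : F (x₀ + y) - F x₀ ≤ ⟪gradient F x₀, y⟫ + C * lam ^ 2 := by
    have := (hquad y hyr).2
    rw [hyn] at this
    linarith
  have hinner : ⟪gradient F x₀, y⟫ = lam * ⟪gradient F x₀, u⟫ := by
    rw [hy, real_inner_smul_right]
  have hvu : ⟪gradient G x₀, u⟫ - ⟪gradient F x₀, u⟫ = ‖v‖ := by
    have : ⟪v, u⟫ = ‖v‖ := by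
      rw [hu, real_inner_smul_right, real_inner_self_eq_norm_sq]
      field_simp
    rw [← this, hv, inner_sub_left]
  have : lam * (⟪gradient G x₀, u⟫ - ⟪gradient F x₀, u⟫) ≤ 2 * δ + C * lam ^ 2 := by
    rw [mul_sub]
    linarith
  rw [hvu] at this
  exact this
end

section
/- Let n ≥ 1, let H : ℝⁿ → ℝ be continuous, and for each k ∈ ℕ let f_k : (0,∞) × ℝⁿ → ℝ be differentiable and satisfy ∂_t f_k(t,x) − H(∇_x f_k(t,x)) ≥ 0 at every point (t,x) ∈ (0,∞) × ℝⁿ. Suppose f_k converges to a function f : (0,∞) × ℝⁿ → ℝ uniformly on every compact subset of (0,∞) × ℝⁿ. Then f is a viscosity supersolution of ∂_t f − H(∇_x f) = 0 on (0,∞) × ℝⁿ. -/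
open Filter

section Aux

variable {E : Type*} [NormedAddCommGroup E] [InnerProductSpace ℝ E] [CompleteSpace E]

/-- Partial derivative in the time variable from a joint Fréchet derivative. -/
lemma aux_partial_t {g : ℝ × E → ℝ} {D : ℝ × E →L[ℝ] ℝ} {t : ℝ} {x : E}
    (h : HasFDerivAt g D (t, x)) :
    HasDerivAt (fun s => g (s, x)) (D (1, 0)) t := by
  have h1 : HasDerivAt (fun s : ℝ => (s, x)) ((1 : ℝ), (0 : E)) t :=
    (hasDerivAt_id t).prodMk (hasDerivAt_const t x)
  exact h.comp_hasDerivAt t h1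

/-- Partial gradient in the space variable from a joint Fréchet derivative. -/
lemma aux_partial_x {g : ℝ × E → ℝ} {D : ℝ × E →L[ℝ] ℝ} {t : ℝ} {x : E}
    (h : HasFDerivAt g D (t, x)) :
    HasGradientAt (fun z => g (t, z))
      ((InnerProductSpace.toDual ℝ E).symm (D.comp (ContinuousLinearMap.inr ℝ ℝ E))) x := by
  have h1 : HasFDerivAt (fun z : E => ((t : ℝ), z)) (ContinuousLinearMap.inr ℝ ℝ E) x := by
    have h2 : HasFDerivAt (fun z : E => ((t : ℝ), z))
        (((0 : E →L[ℝ] ℝ)).prod (ContinuousLinearMap.id ℝ E)) x :=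
      (hasFDerivAt_const t x).prodMk (hasFDerivAt_id x)
    first
      | exact h2
      | · convert h2 using 1
          ext y <;> simp
  exact (h.comp x h1).hasGradientAt

end Aux

set_option synthInstance.maxHeartbeats 1000000 in
set_option maxHeartbeats 2000000 in
/-- If each `f_k : (0,∞) × ℝⁿ → ℝ` is differentiable and satisfies
`∂_t f_k − H(∇_x f_k) ≥ 0` pointwise on `(0,∞) × ℝⁿ`, and `f_k → f` uniformly
on compact subsets of `(0,∞) × ℝⁿ`, then `f` is a viscosity supersolution of
`∂_t f − H(∇_x f) = 0` on `(0,∞) × ℝⁿ`: whenever `φ` is smooth and `f − φ`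
attains a local minimum (within the domain) at `(t,x)` with `t > 0`, one has
`∂_t φ(t,x) − H(∇_x φ(t,x)) ≥ 0`. -/
theorem viscosity_supersolution_of_supersolutions (n : ℕ) (hn : 1 ≤ n)
    (H : EuclideanSpace ℝ (Fin n) → ℝ) (hH : Continuous H)
    (fk : ℕ → ℝ → EuclideanSpace ℝ (Fin n) → ℝ)
    (f : ℝ → EuclideanSpace ℝ (Fin n) → ℝ)
    (hdiff : ∀ (k : ℕ) (t : ℝ) (x : EuclideanSpace ℝ (Fin n)), 0 < t →
      DifferentiableAt ℝ (fun p : ℝ × EuclideanSpace ℝ (Fin n) => fk k p.1 p.2) (t, x))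
    (hsuper : ∀ (k : ℕ) (t : ℝ) (x : EuclideanSpace ℝ (Fin n)), 0 < t →
      0 ≤ deriv (fun s => fk k s x) t - H (gradient (fk k t) x))
    (hconv : TendstoLocallyUniformlyOn
      (fun k => fun p : ℝ × EuclideanSpace ℝ (Fin n) => fk k p.1 p.2)
      (fun p => f p.1 p.2) atTop {p : ℝ × EuclideanSpace ℝ (Fin n) | 0 < p.1}) :
    ∀ (φ : ℝ × EuclideanSpace ℝ (Fin n) → ℝ), ContDiff ℝ (⊤ : ℕ∞) φ →
      ∀ (t : ℝ) (x : EuclideanSpace ℝ (Fin n)), 0 < t →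
        IsLocalMinOn (fun p : ℝ × EuclideanSpace ℝ (Fin n) => f p.1 p.2 - φ p)
          {p : ℝ × EuclideanSpace ℝ (Fin n) | 0 < p.1} (t, x) →
        0 ≤ deriv (fun s => φ (s, x)) t - H (gradient (fun z => φ (t, z)) x) := by
  intro φ hφ t x ht hmin
  set U : Set (ℝ × EuclideanSpace ℝ (Fin n)) := {p | 0 < p.1} with hU
  have hUopen : IsOpen U := isOpen_lt continuous_const continuous_fst
  have hUmem : U ∈ nhds (t, x) := hUopen.mem_nhds ht
  -- the quadratic perturbation
  set q : ℝ × EuclideanSpace ℝ (Fin n) → ℝ := fun p => (p.1 - t) ^ 2 + ‖p.2 - x‖ ^ 2 with hq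
  set ψ : ℝ × EuclideanSpace ℝ (Fin n) → ℝ := fun p => φ p - q p with hψ
  have hqsmooth : ContDiff ℝ (⊤ : ℕ∞) q :=
    (((contDiff_fst.sub contDiff_const).pow 2)).add
      ((contDiff_snd.sub contDiff_const).norm_sq ℝ)
  have hψsmooth : ContDiff ℝ (⊤ : ℕ∞) ψ := hφ.sub hqsmooth
  have hψdiff : ∀ p : ℝ × EuclideanSpace ℝ (Fin n), HasFDerivAt ψ (fderiv ℝ ψ p) p := fun p =>
    (hψsmooth.differentiable (by simp) p).hasFDerivAt
  -- continuous partial-derivative fields of ψ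
  set A : ℝ × EuclideanSpace ℝ (Fin n) → ℝ := fun p => fderiv ℝ ψ p (1, 0) with hA
  set B : ℝ × EuclideanSpace ℝ (Fin n) → EuclideanSpace ℝ (Fin n) := fun p =>
    (InnerProductSpace.toDual ℝ (EuclideanSpace ℝ (Fin n))).symm
      ((fderiv ℝ ψ p).comp (ContinuousLinearMap.inr ℝ ℝ (EuclideanSpace ℝ (Fin n)))) with hB
  have hfderiv_cont : Continuous (fderiv ℝ ψ) := hψsmooth.continuous_fderiv (by simp)
  have hAcont : Continuous A := hfderiv_cont.clm_apply continuous_const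
  have hBcont : Continuous B :=
    (InnerProductSpace.toDual ℝ (EuclideanSpace ℝ (Fin n))).symm.continuous.comp
      (hfderiv_cont.clm_comp_const (ContinuousLinearMap.inr ℝ ℝ (EuclideanSpace ℝ (Fin n))))
  -- local min gives a closed ball inside U on which f - φ is minimized at (t,x)
  have hmin' : IsLocalMin (fun p : ℝ × EuclideanSpace ℝ (Fin n) => f p.1 p.2 - φ p) (t, x) :=
    hmin.isLocalMin hUmem
  have hball : {p : ℝ × EuclideanSpace ℝ (Fin n) | f t x - φ (t, x) ≤ f p.1 p.2 - φ p} ∩ U ∈ nhds (t, x) :=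
    Filter.inter_mem hmin' hUmem
  obtain ⟨ε, hε, hballsub⟩ := Metric.mem_nhds_iff.mp hball
  set r : ℝ := ε / 2 with hr
  have hrpos : 0 < r := by positivity
  set Bl : Set (ℝ × EuclideanSpace ℝ (Fin n)) := Metric.closedBall (t, x) r with hBl
  have hBlsub : Bl ⊆ {p : ℝ × EuclideanSpace ℝ (Fin n) | f t x - φ (t, x) ≤ f p.1 p.2 - φ p} ∩ U := by
    refine subset_trans ?_ hballsub
    exact subset_trans (Metric.closedBall_subset_ball (by linarith)) subset_rfl
  have hBlU : Bl ⊆ U := fun p hp => (hBlsub hp).2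
  have hBlmin : ∀ p ∈ Bl, f t x - φ (t, x) ≤ f p.1 p.2 - φ p := fun p hp => (hBlsub hp).1
  have hBlcompact : IsCompact Bl := isCompact_closedBall _ _
  have hBlne : Bl.Nonempty := ⟨(t, x), Metric.mem_closedBall_self hrpos.le⟩
  have hcenter : (t, x) ∈ Bl := Metric.mem_closedBall_self hrpos.le
  -- uniform convergence on Bl
  have huconv : TendstoUniformlyOn
      (fun k => fun p : ℝ × EuclideanSpace ℝ (Fin n) => fk k p.1 p.2) (fun p => f p.1 p.2) atTop Bl :=
    (tendstoLocallyUniformlyOn_iff_tendstoUniformlyOn_of_compact hBlcompact).mp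
      (hconv.mono hBlU)
  -- choose minimizers of fk k - ψ on Bl
  have hFkcont : ∀ k, ContinuousOn (fun p : ℝ × EuclideanSpace ℝ (Fin n) => fk k p.1 p.2 - ψ p) Bl := by
    intro k
    apply ContinuousOn.sub _ (hψsmooth.continuous.continuousOn)
    intro p hp
    have := (hdiff k p.1 p.2 (hBlU hp)).continuousAt
    rw [Prod.mk.eta] at this
    exact this.continuousWithinAt
  have hchoice : ∀ k : ℕ, ∃ p ∈ Bl,
      IsMinOn (fun p : ℝ × EuclideanSpace ℝ (Fin n) => fk k p.1 p.2 - ψ p) Bl p := fun k =>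
    hBlcompact.exists_isMinOn hBlne (hFkcont k)
  choose P hPmem hPmin using hchoice
  -- quantitative estimate: q (P k) → 0
  have hkey : ∀ p ∈ Bl, f t x - ψ (t, x) + q p ≤ f p.1 p.2 - ψ p := by
    intro p hp
    have h1 := hBlmin p hp
    have hq0 : q (t, x) = 0 := by simp [hq]
    simp only [hψ]
    have : f t x - (φ (t, x) - q (t, x)) = f t x - φ (t, x) := by rw [hq0]; ring
    rw [this]
    have : f p.1 p.2 - (φ p - q p) = (f p.1 p.2 - φ p) + q p := by ring
    rw [this]
    linarith
  have hqtend : Filter.Tendsto (fun k => q (P k)) atTop (nhds 0) := by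
    rw [NormedAddCommGroup.tendsto_nhds_zero]
    intro δ hδ
    have h4 : 0 < δ / 4 := by linarith
    have := (Metric.tendstoUniformlyOn_iff.mp huconv) (δ / 4) h4
    filter_upwards [this] with k hk
    have h1 : dist (f (P k).1 (P k).2) (fk k (P k).1 (P k).2) < δ / 4 := hk _ (hPmem k)
    have h2 : dist (f t x) (fk k t x) < δ / 4 := by
      have := hk (t, x) hcenter; simpa using this
    rw [Real.dist_eq] at h1 h2
    have hmin1 : fk k (P k).1 (P k).2 - ψ (P k) ≤ fk k t x - ψ (t, x) := hPmin k hcenter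
    have hk1 := hkey (P k) (hPmem k)
    have hqnn : 0 ≤ q (P k) := by positivity
    rw [Real.norm_eq_abs, abs_of_nonneg hqnn]
    have e1 : fk k (P k).1 (P k).2 ≥ f (P k).1 (P k).2 - δ / 4 := by
      cases abs_lt.mp h1 with | intro a b => linarith
    have e2 : fk k t x ≤ f t x + δ / 4 := by
      cases abs_lt.mp h2 with | intro a b => linarith
    linarith
  -- P k → (t, x)
  have htend1 : Filter.Tendsto (fun k => ((P k).1 - t) ^ 2) atTop (nhds 0) :=
    squeeze_zero (fun k => sq_nonneg _) (fun k => le_add_of_nonneg_right (by positivity)) hqtend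
  have htend2 : Filter.Tendsto (fun k => ‖(P k).2 - x‖ ^ 2) atTop (nhds 0) :=
    squeeze_zero (fun k => by positivity) (fun k => le_add_of_nonneg_left (sq_nonneg _)) hqtend
  have habs1 : Filter.Tendsto (fun k => |(P k).1 - t|) atTop (nhds 0) := by
    have := (Real.continuous_sqrt.tendsto 0).comp htend1
    simpa [Function.comp_def, Real.sqrt_sq_eq_abs] using this
  have hP1 : Filter.Tendsto (fun k => (P k).1) atTop (nhds t) := by
    rw [← tendsto_sub_nhds_zero_iff]
    exact (tendsto_zero_iff_abs_tendsto_zero _).mpr habs1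
  have hnorm2 : Filter.Tendsto (fun k => ‖(P k).2 - x‖) atTop (nhds 0) := by
    have := (Real.continuous_sqrt.tendsto 0).comp htend2
    simpa [Function.comp_def, Real.sqrt_sq (norm_nonneg _)] using this
  have hP2 : Filter.Tendsto (fun k => (P k).2) atTop (nhds x) :=
    tendsto_iff_norm_sub_tendsto_zero.mpr hnorm2
  have hPtend : Filter.Tendsto P atTop (nhds (t, x)) := by
    have := hP1.prodMk_nhds hP2
    simpa using this
  -- eventually the inequality at P k
  have hev : ∀ᶠ k in atTop, 0 ≤ A (P k) - H (B (P k)) := by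
    have hballin : ∀ᶠ k in atTop, P k ∈ Metric.ball (t, x) r :=
      hPtend (Metric.ball_mem_nhds _ hrpos)
    filter_upwards [hballin] with k hin
    have hPU : (P k) ∈ U := hBlU (hPmem k)
    have htk : 0 < (P k).1 := hPU
    -- P k is a local min of fk k - ψ
    have hloc : IsLocalMin (fun p : ℝ × EuclideanSpace ℝ (Fin n) => fk k p.1 p.2 - ψ p) (P k) :=
      (hPmin k).isLocalMin
        (Filter.mem_of_superset (Metric.isOpen_ball.mem_nhds hin) Metric.ball_subset_closedBall)
    have hFk : HasFDerivAt (fun p : ℝ × EuclideanSpace ℝ (Fin n) => fk k p.1 p.2)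
        (fderiv ℝ (fun p : ℝ × EuclideanSpace ℝ (Fin n) => fk k p.1 p.2) (P k)) (P k) := by
      have := (hdiff k (P k).1 (P k).2 htk)
      rw [Prod.mk.eta] at this
      exact this.hasFDerivAt
    have hzero := hloc.hasFDerivAt_eq_zero (hFk.sub (hψdiff (P k)))
    have hDeq : fderiv ℝ (fun p : ℝ × EuclideanSpace ℝ (Fin n) => fk k p.1 p.2) (P k) = fderiv ℝ ψ (P k) :=
      sub_eq_zero.mp hzero
    -- compute the partial derivative and gradient of fk k at P k
    have hFk' : HasFDerivAt (fun p : ℝ × EuclideanSpace ℝ (Fin n) => fk k p.1 p.2) (fderiv ℝ ψ (P k))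
        (((P k).1, (P k).2)) := by rw [Prod.mk.eta]; rw [hDeq] at hFk; exact hFk
    have hd : deriv (fun s => fk k s (P k).2) (P k).1 = A (P k) := by
      have := (aux_partial_t hFk').deriv
      simpa [hA] using this
    have hg : gradient (fk k (P k).1) (P k).2 = B (P k) := by
      have := (aux_partial_x hFk').gradient
      simpa [hB] using this
    have := hsuper k (P k).1 (P k).2 htk
    rw [hd, hg] at this
    exact this
  -- pass to the limit
  have hlim : Filter.Tendsto (fun k => A (P k) - H (B (P k))) atTop
      (nhds (A (t, x) - H (B (t, x)))) := by
    have h1 : Filter.Tendsto (fun k => A (P k)) atTop (nhds (A (t, x))) :=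
      (hAcont.tendsto _).comp hPtend
    have h2 : Filter.Tendsto (fun k => H (B (P k))) atTop (nhds (H (B (t, x)))) :=
      ((hH.tendsto _).comp ((hBcont.tendsto _).comp hPtend))
    exact h1.sub h2
  have hfinal : 0 ≤ A (t, x) - H (B (t, x)) := ge_of_tendsto hlim hev
  -- identify A (t,x), B (t,x) with the derivatives of φ
  have hqD : HasFDerivAt q (0 : ℝ × EuclideanSpace ℝ (Fin n) →L[ℝ] ℝ) (t, x) := by
    have h1 : HasDerivAt (fun s : ℝ => (s - t) ^ 2) 0 t := by
      simpa [Pi.pow_def] using ((hasDerivAt_id t).sub_const t).pow 2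
    have h1' : HasFDerivAt (fun p : ℝ × EuclideanSpace ℝ (Fin n) => (p.1 - t) ^ 2) (0 : ℝ × EuclideanSpace ℝ (Fin n) →L[ℝ] ℝ) (t, x) := by
      have h := h1.hasFDerivAt.comp (t, x) (hasFDerivAt_fst (𝕜 := ℝ) (p := (t, x)))
      have e : (ContinuousLinearMap.toSpanSingleton ℝ (0 : ℝ)).comp
          (ContinuousLinearMap.fst ℝ ℝ (EuclideanSpace ℝ (Fin n)))
          = (0 : ℝ × EuclideanSpace ℝ (Fin n) →L[ℝ] ℝ) := by
        ext p <;> simp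
      rw [e] at h
      exact h
    have h2 : HasFDerivAt (fun p : ℝ × EuclideanSpace ℝ (Fin n) => ‖p.2 - x‖ ^ 2) (0 : ℝ × EuclideanSpace ℝ (Fin n) →L[ℝ] ℝ) (t, x) := by
      have hsub : HasFDerivAt (fun p : ℝ × EuclideanSpace ℝ (Fin n) => p.2 - x)
          ((ContinuousLinearMap.snd ℝ ℝ (EuclideanSpace ℝ (Fin n)))) (t, x) := (hasFDerivAt_snd.sub_const x)
      have := hsub.norm_sq
      simp only [sub_self] at this
      refine this.congr_fderiv ?_
      ext y <;> simp [inner_zero_left]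
    have h := h1'.add h2
    rw [add_zero] at h
    exact h
  have hφD : HasFDerivAt φ (fderiv ℝ φ (t, x)) (t, x) :=
    (hφ.differentiable (by simp) _).hasFDerivAt
  have hψeq : fderiv ℝ ψ (t, x) = fderiv ℝ φ (t, x) := by
    have : HasFDerivAt ψ (fderiv ℝ φ (t, x) - 0) (t, x) := hφD.sub hqD
    rw [sub_zero] at this
    exact this.fderiv
  have hdφ : deriv (fun s => φ (s, x)) t = A (t, x) := by
    have h := (aux_partial_t hφD).deriv
    rw [h]
    simp only [hA]
    rw [hψeq]
  have hgφ : gradient (fun z => φ (t, z)) x = B (t, x) := by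
    have h := (aux_partial_x hφD).gradient
    rw [h]
    simp only [hB]
    rw [hψeq]
  rw [hdφ, hgφ]
  exact hfinal
end

section
/- Let n ≥ 1, let H : ℝⁿ → ℝ be continuous, and let C₀ ≥ 0. For each k ∈ ℕ let f_k : (0,∞) × ℝⁿ → ℝ be twice continuously differentiable, with f_k(t,·) convex on ℝⁿ for each fixed t > 0, and suppose that at every point (t,x) ∈ (0,∞) × ℝⁿ: ∂_t f_k(t,x) − H(∇_x f_k(t,x)) ≤ C₀ ( k^{-1} Δ_x f_k(t,x) )^{1/2}, where Δ_x f_k is the Laplacian of f_k(t,·) in x (which is nonnegative by convexity). Suppose f_k converges to a function f : (0,∞) × ℝⁿ → ℝ uniformly on every compact subset of (0,∞) × ℝⁿ. Then f is a viscosity subsolution of ∂_t f − H(∇_x f) = 0 on (0,∞) × ℝⁿ. -/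
open Filter Topology

lemma second_deriv_nonpos_of_isLocalMax {h : ℝ → ℝ}
    (hd : ∀ x : ℝ, DifferentiableAt ℝ h x)
    (hd2 : DifferentiableAt ℝ (deriv h) 0)
    (hmax : IsLocalMax h 0) : deriv (deriv h) 0 ≤ 0 := by
  by_contra hc
  push_neg at hc
  have h0 : deriv h 0 = 0 := hmax.deriv_eq_zero
  have hslope : Tendsto (fun r : ℝ => deriv h r / r) (𝓝[≠] (0:ℝ))
      (𝓝 (deriv (deriv h) 0)) := by
    have := hasDerivAt_iff_tendsto_slope.1 hd2.hasDerivAt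
    have heq : (slope (deriv h) 0) = fun r : ℝ => deriv h r / r := by
      funext r; rw [slope_def_field, h0]; ring
    rwa [heq] at this
  have hev : ∀ᶠ r in 𝓝[≠] (0:ℝ), 0 < deriv h r / r :=
    hslope.eventually (eventually_gt_nhds hc)
  have hev2 : ∀ᶠ r in 𝓝 (0:ℝ), h r ≤ h 0 := hmax
  obtain ⟨δ, hδ, hball⟩ := Metric.mem_nhdsWithin_iff.1 (hev.and (self_mem_nhdsWithin))
  obtain ⟨δ', hδ', hball'⟩ := Metric.mem_nhds_iff.1 hev2
  set ε := min (δ/2) (δ'/2) with hε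
  have hεpos : 0 < ε := lt_min (by linarith) (by linarith)
  have hmono : StrictMonoOn h (Set.Icc 0 ε) := by
    apply strictMonoOn_of_deriv_pos (convex_Icc 0 ε)
      (fun z _ => (hd z).continuousAt.continuousWithinAt)
    intro z hz
    rw [interior_Icc] at hz
    have hzball : z ∈ Metric.ball (0:ℝ) δ ∩ {(0:ℝ)}ᶜ := by
      constructor
      · rw [Metric.mem_ball, Real.dist_eq, sub_zero, abs_of_pos hz.1]
        calc z < ε := hz.2
          _ ≤ δ/2 := min_le_left _ _
          _ < δ := by linarith
      · exact ne_of_gt hz.1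
    have := (hball hzball).1
    have hz0 : 0 < z := hz.1
    nlinarith [this, mul_pos this hz0, div_mul_cancel₀ (deriv h z) (ne_of_gt hz0)]
  have hlt : h 0 < h ε := hmono (by constructor <;> simp [le_of_lt hεpos])
    (by constructor <;> simp [le_of_lt hεpos]) hεpos
  have hle : h ε ≤ h 0 := hball' (by
    rw [Metric.mem_ball, Real.dist_eq, sub_zero, abs_of_pos hεpos]
    calc ε ≤ δ'/2 := min_le_right _ _
      _ < δ' := by linarith)
  linarith

set_option maxHeartbeats 2000000 in
/-- If each `f_k : (0,∞) × ℝⁿ → ℝ` is `C²`, convex in `x` for each fixed `t`,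
and satisfies `∂_t f_k − H(∇_x f_k) ≤ C₀ (k⁻¹ Δ_x f_k)^{1/2}` pointwise (with
`Δ_x` the Laplacian in `x`, a sum of second derivatives along the coordinate
directions), and `f_k → f` uniformly on compact subsets of `(0,∞) × ℝⁿ`, then
`f` is a viscosity subsolution of `∂_t f − H(∇_x f) = 0` on `(0,∞) × ℝⁿ`. -/
theorem viscosity_subsolution_of_approx_subsolutions (n : ℕ) (hn : 1 ≤ n)
    (H : EuclideanSpace ℝ (Fin n) → ℝ) (hH : Continuous H)
    (C₀ : ℝ) (hC₀ : 0 ≤ C₀)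
    (fk : ℕ → ℝ → EuclideanSpace ℝ (Fin n) → ℝ)
    (f : ℝ → EuclideanSpace ℝ (Fin n) → ℝ)
    (hreg : ∀ k : ℕ, ContDiffOn ℝ 2
      (fun p : ℝ × EuclideanSpace ℝ (Fin n) => fk k p.1 p.2)
      {p : ℝ × EuclideanSpace ℝ (Fin n) | 0 < p.1})
    (hconvx : ∀ (k : ℕ) (t : ℝ), 0 < t → ConvexOn ℝ Set.univ (fk k t))
    (hsub : ∀ (k : ℕ) (t : ℝ) (x : EuclideanSpace ℝ (Fin n)), 0 < t →
      deriv (fun s => fk k s x) t - H (gradient (fk k t) x)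
        ≤ C₀ * Real.sqrt ((k : ℝ)⁻¹
            * ∑ i : Fin n, deriv (deriv (fun r : ℝ =>
                fk k t (x + r • EuclideanSpace.single i (1 : ℝ)))) 0)
      ∧ 0 ≤ ∑ i : Fin n, deriv (deriv (fun r : ℝ =>
                fk k t (x + r • EuclideanSpace.single i (1 : ℝ)))) 0)
    (hconv : TendstoLocallyUniformlyOn
      (fun k => fun p : ℝ × EuclideanSpace ℝ (Fin n) => fk k p.1 p.2)
      (fun p => f p.1 p.2) atTop {p : ℝ × EuclideanSpace ℝ (Fin n) | 0 < p.1}) :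
    ∀ (φ : ℝ × EuclideanSpace ℝ (Fin n) → ℝ), ContDiff ℝ (⊤ : ℕ∞) φ →
      ∀ (t : ℝ) (x : EuclideanSpace ℝ (Fin n)), 0 < t →
        IsLocalMaxOn (fun p : ℝ × EuclideanSpace ℝ (Fin n) => f p.1 p.2 - φ p)
          {p : ℝ × EuclideanSpace ℝ (Fin n) | 0 < p.1} (t, x) →
        deriv (fun s => φ (s, x)) t - H (gradient (fun z => φ (t, z)) x) ≤ 0 := by
  intro φ hφ t x ht hmax
  set U : Set (ℝ × EuclideanSpace ℝ (Fin n)) := {p : ℝ × EuclideanSpace ℝ (Fin n) | 0 < p.1} with hU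
  have hUo : IsOpen U := isOpen_lt continuous_const continuous_fst
  have hUn : U ∈ 𝓝 ((t, x) : ℝ × EuclideanSpace ℝ (Fin n)) := hUo.mem_nhds ht
  -- the perturbed test function
  set ψ : ℝ × EuclideanSpace ℝ (Fin n) → ℝ := fun p => φ p + ((p.1 - t) ^ 2 + ‖p.2 - x‖ ^ 2) with hψdef
  have hψ : ContDiff ℝ (⊤ : ℕ∞) ψ := by
    apply hφ.add
    exact ((contDiff_fst.sub contDiff_const).pow 2).add
      ((contDiff_snd.sub contDiff_const).norm_sq ℝ)
  -- the local max inequality holds on a closed ball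
  have hmaxn : ∀ᶠ p in 𝓝 ((t, x) : ℝ × EuclideanSpace ℝ (Fin n)), f p.1 p.2 - φ p ≤ f t x - φ (t, x) :=
    hmax.filter_mono (nhdsWithin_eq_nhds.2 hUn).ge
  have hmem : {p : ℝ × EuclideanSpace ℝ (Fin n) | 0 < p.1 ∧ f p.1 p.2 - φ p ≤ f t x - φ (t, x)}
      ∈ 𝓝 ((t, x) : ℝ × EuclideanSpace ℝ (Fin n)) := by
    filter_upwards [hUn, hmaxn] with p h1 h2
    exact ⟨h1, h2⟩
  obtain ⟨r, hr, hrsub⟩ := Metric.nhds_basis_closedBall.mem_iff.1 hmem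
  set B : Set (ℝ × EuclideanSpace ℝ (Fin n)) := Metric.closedBall ((t, x) : ℝ × EuclideanSpace ℝ (Fin n)) r with hBdef
  have hBU : B ⊆ U := fun p hp => (hrsub hp).1
  have hBg : ∀ p ∈ B, f p.1 p.2 - φ p ≤ f t x - φ (t, x) := fun p hp => (hrsub hp).2
  have hBcpt : IsCompact B := isCompact_closedBall _ _
  have htxB : ((t, x) : ℝ × EuclideanSpace ℝ (Fin n)) ∈ B := Metric.mem_closedBall_self hr.le
  -- distance lower bound for the perturbation
  have hq : ∀ p : ℝ × EuclideanSpace ℝ (Fin n), dist p ((t, x) : ℝ × EuclideanSpace ℝ (Fin n)) ^ 2 ≤ (p.1 - t) ^ 2 + ‖p.2 - x‖ ^ 2 := by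
    intro p
    rw [Prod.dist_eq, Real.dist_eq, dist_eq_norm]
    rcases le_total |p.1 - t| ‖p.2 - x‖ with h | h
    · rw [max_eq_right h]
      nlinarith [sq_abs (p.1 - t), sq_nonneg (p.1 - t)]
    · rw [max_eq_left h]
      nlinarith [sq_abs (p.1 - t), norm_nonneg (p.2 - x), sq_nonneg ‖p.2 - x‖]
  -- choose maximizers of fk - ψ on B
  have hmaxex : ∀ k : ℕ, ∃ p ∈ B, IsMaxOn (fun q : ℝ × EuclideanSpace ℝ (Fin n) => fk k q.1 q.2 - ψ q) B p := by
    intro k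
    exact hBcpt.exists_isMaxOn ⟨(t, x), htxB⟩
      (((hreg k).continuousOn.mono hBU).sub hψ.continuous.continuousOn)
  choose p hpB hpmax using hmaxex
  -- uniform convergence on B
  have hu : ∀ ε > 0, ∀ᶠ k : ℕ in atTop, ∀ q ∈ B,
      dist (f q.1 q.2) (fk k q.1 q.2) < ε :=
    Metric.tendstoUniformlyOn_iff.1
      ((tendstoLocallyUniformlyOn_iff_tendstoUniformlyOn_of_compact hBcpt).1
        (hconv.mono hBU))
  have hψtx : ψ ((t, x) : ℝ × EuclideanSpace ℝ (Fin n)) = φ (t, x) := by simp [hψdef]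
  -- the maximizers converge to (t,x)
  have hp : Tendsto p atTop (𝓝 ((t, x) : ℝ × EuclideanSpace ℝ (Fin n))) := by
    rw [Metric.tendsto_nhds]
    intro ε hε
    filter_upwards [hu (ε ^ 2 / 2) (by positivity)] with k hk
    by_contra hcon
    push_neg at hcon
    have hd2 : ε ^ 2 ≤ dist (p k) ((t, x) : ℝ × EuclideanSpace ℝ (Fin n)) ^ 2 :=
      pow_le_pow_left₀ hε.le hcon 2
    have hqk : ε ^ 2 ≤ ((p k).1 - t) ^ 2 + ‖(p k).2 - x‖ ^ 2 :=
      hd2.trans (hq (p k))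
    have h1 : fk k t x - ψ (t, x) ≤ fk k (p k).1 (p k).2 - ψ (p k) :=
      hpmax k htxB
    have e1 : |f t x - fk k t x| < ε ^ 2 / 2 := by
      rw [← Real.dist_eq]; exact hk (t, x) htxB
    have e2 : |f (p k).1 (p k).2 - fk k (p k).1 (p k).2| < ε ^ 2 / 2 := by
      rw [← Real.dist_eq]; exact hk (p k) (hpB k)
    have hg : f (p k).1 (p k).2 - φ (p k) ≤ f t x - φ (t, x) := hBg _ (hpB k)
    rw [abs_lt] at e1 e2
    have hψpk : ψ (p k) = φ (p k) + (((p k).1 - t) ^ 2 + ‖(p k).2 - x‖ ^ 2) := rfl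
    rw [hψtx, hψpk] at h1
    linarith
  -- abbreviations for derivative data of ψ
  set A : ℝ × EuclideanSpace ℝ (Fin n) → ℝ := fun q => fderiv ℝ ψ q ((1 : ℝ), (0 : EuclideanSpace ℝ (Fin n))) with hAdef
  set Gr : ℝ × EuclideanSpace ℝ (Fin n) → EuclideanSpace ℝ (Fin n) := fun q =>
    (InnerProductSpace.toDual ℝ (EuclideanSpace ℝ (Fin n))).symm
      ((fderiv ℝ ψ q).comp (ContinuousLinearMap.inr ℝ ℝ (EuclideanSpace ℝ (Fin n)))) with hGrdef
  set e : Fin n → EuclideanSpace ℝ (Fin n) := fun i => EuclideanSpace.single i (1 : ℝ) with hedef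
  set v : Fin n → ℝ × EuclideanSpace ℝ (Fin n) := fun i => ((0 : ℝ), e i) with hvdef
  set W : Fin n → ℝ × EuclideanSpace ℝ (Fin n) → ℝ := fun i q => fderiv ℝ ψ q (v i) with hWdef
  have hψW : ∀ i, ContDiff ℝ (⊤ : ℕ∞) (W i) := fun i =>
    (hψ.fderiv_right (by simp)).clm_apply contDiff_const
  set S : ℝ × EuclideanSpace ℝ (Fin n) → ℝ := fun q => ∑ i : Fin n, fderiv ℝ (fun q' => fderiv ℝ ψ q' (v i)) q (v i)
    with hSdef
  -- continuity
  have hψfc : Continuous (fderiv ℝ ψ) := hψ.continuous_fderiv (by simp : ((⊤ : ℕ∞) : WithTop ℕ∞) ≠ 0)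
  have hA : Continuous A := hψfc.clm_apply continuous_const
  have hGr : Continuous Gr :=
    (InnerProductSpace.toDual ℝ (EuclideanSpace ℝ (Fin n))).symm.continuous.comp
      (hψfc.clm_comp continuous_const)
  have hS : Continuous S := by
    apply continuous_finset_sum
    intro i _
    exact ((hψW i).continuous_fderiv (by simp : ((⊤ : ℕ∞) : WithTop ℕ∞) ≠ 0)).clm_apply continuous_const
  -- derivative formulas for ψ
  have hline : ∀ (y : EuclideanSpace ℝ (Fin n)) (s : ℝ), HasDerivAt (fun s' : ℝ => ((s', y) : ℝ × EuclideanSpace ℝ (Fin n)))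
      ((1 : ℝ), (0 : EuclideanSpace ℝ (Fin n))) s := fun y s => (hasDerivAt_id s).prodMk (hasDerivAt_const s y)
  have h1ψ : ∀ q : ℝ × EuclideanSpace ℝ (Fin n), HasDerivAt (fun s => ψ (s, q.2)) (A q) q.1 := by
    intro q
    have := ((hψ.differentiable (by simp : ((⊤ : ℕ∞) : WithTop ℕ∞) ≠ 0)) (q.1, q.2)).hasFDerivAt.comp_hasDerivAt q.1
      (hline q.2 q.1)
    exact this
  have hinr : ∀ (c : ℝ) (y : EuclideanSpace ℝ (Fin n)), HasFDerivAt (fun z : EuclideanSpace ℝ (Fin n) => ((c, z) : ℝ × EuclideanSpace ℝ (Fin n)))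
      (ContinuousLinearMap.inr ℝ ℝ (EuclideanSpace ℝ (Fin n))) y := by
    intro c y
    have h := (ContinuousLinearMap.inr ℝ ℝ (EuclideanSpace ℝ (Fin n))).hasFDerivAt (x := y)
    have h2 := h.const_add ((c, 0) : ℝ × EuclideanSpace ℝ (Fin n))
    exact h2.congr_of_eventuallyEq (Filter.Eventually.of_forall fun z => by
      simp [Prod.ext_iff])
  have hgradψ : ∀ q : ℝ × EuclideanSpace ℝ (Fin n), gradient (fun z => ψ (q.1, z)) q.2 = Gr q := by
    intro q
    unfold gradient
    congr 1
    have := (((hψ.differentiable (by simp : ((⊤ : ℕ∞) : WithTop ℕ∞) ≠ 0)) (q.1, q.2)).hasFDerivAt.comp q.2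
      (hinr q.1 q.2))
    exact this.fderiv
  have hline2 : ∀ (q : ℝ × EuclideanSpace ℝ (Fin n)) (i : Fin n) (r₀ : ℝ),
      HasDerivAt (fun rr : ℝ => q + rr • v i) (v i) r₀ := by
    intro q i r₀
    simpa using ((hasDerivAt_id r₀).smul_const (v i)).const_add q
  have h2ψ : ∀ (q : ℝ × EuclideanSpace ℝ (Fin n)) (i : Fin n) (r₀ : ℝ),
      HasDerivAt (fun rr : ℝ => ψ (q + rr • v i)) (W i (q + r₀ • v i)) r₀ := by
    intro q i r₀
    exact ((hψ.differentiable (by simp : ((⊤ : ℕ∞) : WithTop ℕ∞) ≠ 0)) _).hasFDerivAt.comp_hasDerivAt r₀ (hline2 q i r₀)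
  have h2ψ' : ∀ (q : ℝ × EuclideanSpace ℝ (Fin n)) (i : Fin n) (r₀ : ℝ),
      HasDerivAt (fun rr : ℝ => W i (q + rr • v i))
        (fderiv ℝ (fun q' => fderiv ℝ ψ q' (v i)) (q + r₀ • v i) (v i)) r₀ := by
    intro q i r₀
    exact (((hψW i).differentiable (by simp : ((⊤ : ℕ∞) : WithTop ℕ∞) ≠ 0)) _).hasFDerivAt.comp_hasDerivAt r₀ (hline2 q i r₀)
  -- differentiability data for fk on U
  set Fk : ℕ → ℝ × EuclideanSpace ℝ (Fin n) → ℝ := fun k q => fk k q.1 q.2 with hFkdef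
  have hdFk : ∀ (k : ℕ) (q : ℝ × EuclideanSpace ℝ (Fin n)), q ∈ U → DifferentiableAt ℝ (Fk k) q := by
    intro k q hq
    exact ((hreg k).differentiableOn (by norm_num)).differentiableAt (hUo.mem_nhds hq)
  have hfd2 : ∀ k : ℕ, ContDiffOn ℝ 1 (fderiv ℝ (Fk k)) U := by
    intro k
    exact (hreg k).fderiv_of_isOpen hUo (by norm_num)
  -- the eventual inequality
  have hev : ∀ᶠ k : ℕ in atTop,
      A (p k) - H (Gr (p k)) ≤ C₀ * Real.sqrt ((k : ℝ)⁻¹ * S (p k)) := by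
    have hball : ∀ᶠ k : ℕ in atTop, p k ∈ Metric.ball ((t, x) : ℝ × EuclideanSpace ℝ (Fin n)) r :=
      hp (Metric.ball_mem_nhds _ hr)
    filter_upwards [hball] with k hk
    have hpU : (p k) ∈ U := hBU (hpB k)
    have hpU1 : 0 < (p k).1 := hpU
    have hGmax : IsLocalMax (fun q : ℝ × EuclideanSpace ℝ (Fin n) => fk k q.1 q.2 - ψ q) (p k) :=
      (hpmax k).isLocalMax (Metric.closedBall_mem_nhds_of_mem hk)
    -- time derivative equality
    have hdF1 : HasDerivAt (fun s => fk k s (p k).2)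
        (fderiv ℝ (Fk k) (p k) ((1:ℝ), (0:EuclideanSpace ℝ (Fin n)))) (p k).1 := by
      have := (hdFk k (p k) hpU).hasFDerivAt.comp_hasDerivAt (p k).1
        (hline (p k).2 (p k).1)
      exact this
    have htmax : IsLocalMax (fun s => fk k s (p k).2 - ψ (s, (p k).2)) (p k).1 := by
      have htend : Tendsto (fun s : ℝ => ((s, (p k).2) : ℝ × EuclideanSpace ℝ (Fin n))) (𝓝 (p k).1) (𝓝 (p k)) := by
        have := (continuous_id.prodMk (continuous_const (y := (p k).2))).tendsto (p k).1
        simpa using this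
      have hGmax' : IsMaxFilter (fun q : ℝ × EuclideanSpace ℝ (Fin n) => fk k q.1 q.2 - ψ q) (𝓝 (p k))
          ((fun s : ℝ => ((s, (p k).2) : ℝ × EuclideanSpace ℝ (Fin n))) (p k).1) := by
        exact hGmax
      exact IsMaxFilter.comp_tendsto (g := fun s : ℝ => ((s, (p k).2) : ℝ × EuclideanSpace ℝ (Fin n))) hGmax' htend
    have htderiv : deriv (fun s => fk k s (p k).2) (p k).1 = A (p k) := by
      have hz := htmax.deriv_eq_zero
      have hsub' : deriv (fun s => fk k s (p k).2 - ψ (s, (p k).2)) (p k).1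
          = deriv (fun s => fk k s (p k).2) (p k).1 - deriv (fun s => ψ (s, (p k).2)) (p k).1 :=
        deriv_sub hdF1.differentiableAt (h1ψ (p k)).differentiableAt
      rw [hsub'] at hz
      rw [(h1ψ (p k)).deriv] at hz
      linarith
    -- gradient equality
    have hdF2 : HasFDerivAt (fun z => fk k (p k).1 z)
        ((fderiv ℝ (Fk k) (p k)).comp (ContinuousLinearMap.inr ℝ ℝ (EuclideanSpace ℝ (Fin n)))) (p k).2 := by
      have := (hdFk k (p k) hpU).hasFDerivAt.comp (p k).2 (hinr (p k).1 (p k).2)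
      exact this
    have hdψ2 : HasFDerivAt (fun z => ψ ((p k).1, z))
        ((fderiv ℝ ψ (p k)).comp (ContinuousLinearMap.inr ℝ ℝ (EuclideanSpace ℝ (Fin n)))) (p k).2 := by
      have := ((hψ.differentiable (by simp : ((⊤ : ℕ∞) : WithTop ℕ∞) ≠ 0)) ((p k).1, (p k).2)).hasFDerivAt.comp (p k).2
        (hinr (p k).1 (p k).2)
      exact this
    have hxmax : IsLocalMax (fun z => fk k (p k).1 z - ψ ((p k).1, z)) (p k).2 := by
      have htend : Tendsto (fun z : EuclideanSpace ℝ (Fin n) => (((p k).1, z) : ℝ × EuclideanSpace ℝ (Fin n))) (𝓝 (p k).2) (𝓝 (p k)) := by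
        have := ((continuous_const (y := (p k).1)).prodMk continuous_id).tendsto (p k).2
        simpa using this
      have hGmax' : IsMaxFilter (fun q : ℝ × EuclideanSpace ℝ (Fin n) => fk k q.1 q.2 - ψ q) (𝓝 (p k))
          ((fun z : EuclideanSpace ℝ (Fin n) => (((p k).1, z) : ℝ × EuclideanSpace ℝ (Fin n))) (p k).2) := by
        exact hGmax
      exact hGmax'.comp_tendsto htend
    have hgrad : gradient (fk k (p k).1) (p k).2 = Gr (p k) := by
      have hz := hxmax.fderiv_eq_zero
      have hsub' : fderiv ℝ (fun z => fk k (p k).1 z - ψ ((p k).1, z)) (p k).2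
          = fderiv ℝ (fun z => fk k (p k).1 z) (p k).2
            - fderiv ℝ (fun z => ψ ((p k).1, z)) (p k).2 :=
        fderiv_sub hdF2.differentiableAt hdψ2.differentiableAt
      rw [hsub', sub_eq_zero] at hz
      unfold gradient
      rw [hGrdef]
      congr 1
      rw [show fderiv ℝ (fk k (p k).1) (p k).2 = fderiv ℝ (fun z => fk k (p k).1 z) (p k).2
        from rfl, hz, hdψ2.fderiv]
    -- second derivative inequality
    have hsecond : ∀ i : Fin n,
        deriv (deriv (fun rr : ℝ => fk k (p k).1 ((p k).2 + rr • e i))) 0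
          ≤ fderiv ℝ (fun q' => fderiv ℝ ψ q' (v i)) (p k) (v i) := by
      intro i
      have hcU : ∀ rr : ℝ, p k + rr • v i ∈ U := by
        intro rr
        show 0 < (p k + rr • v i).1
        simp [hvdef]
        exact hpU1
      have hdu : ∀ rr : ℝ, HasDerivAt (fun rr' : ℝ => Fk k (p k + rr' • v i))
          (fderiv ℝ (Fk k) (p k + rr • v i) (v i)) rr := by
        intro rr
        exact (hdFk k _ (hcU rr)).hasFDerivAt.comp_hasDerivAt rr (hline2 (p k) i rr)
      have hueq : (fun rr : ℝ => fk k (p k).1 ((p k).2 + rr • e i))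
          = fun rr : ℝ => Fk k (p k + rr • v i) := by
        funext rr
        show fk k (p k).1 ((p k).2 + rr • e i) = fk k (p k + rr • v i).1 (p k + rr • v i).2
        simp [hvdef]
      have hderivu : deriv (fun rr : ℝ => Fk k (p k + rr • v i))
          = fun rr => fderiv ℝ (Fk k) (p k + rr • v i) (v i) :=
        funext fun rr => (hdu rr).deriv
      have hderivw : deriv (fun rr : ℝ => ψ (p k + rr • v i))
          = fun rr => W i (p k + rr • v i) :=
        funext fun rr => (h2ψ (p k) i rr).deriv
      -- differentiability of the two derivative functions at 0
      have hdWF : DifferentiableAt ℝ (fun rr : ℝ => fderiv ℝ (Fk k) (p k + rr • v i) (v i)) 0 := by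
        have houter : DifferentiableAt ℝ (fun q => fderiv ℝ (Fk k) q (v i)) (p k + (0:ℝ) • v i) := by
          have := ((hfd2 k).differentiableOn one_ne_zero).differentiableAt
            (hUo.mem_nhds (hcU 0))
          exact this.clm_apply (differentiableAt_const _)
        exact houter.comp 0 (hline2 (p k) i 0).differentiableAt
      have hdWψ : DifferentiableAt ℝ (fun rr : ℝ => W i (p k + rr • v i)) 0 :=
        (h2ψ' (p k) i 0).differentiableAt
      -- local max of the difference along the line
      have hlmax : IsLocalMax (fun rr : ℝ =>
          Fk k (p k + rr • v i) - ψ (p k + rr • v i)) 0 := by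
        have htend : Tendsto (fun rr : ℝ => p k + rr • v i) (𝓝 0) (𝓝 (p k)) := by
          have := (hline2 (p k) i 0).continuousAt.tendsto
          simpa using this
        have hGmax' : IsMaxFilter (fun q : ℝ × EuclideanSpace ℝ (Fin n) => fk k q.1 q.2 - ψ q) (𝓝 (p k))
            ((fun rr : ℝ => p k + rr • v i) 0) := by
          simp only [zero_smul, add_zero]
          exact hGmax
        exact IsMaxFilter.comp_tendsto (g := fun rr : ℝ => p k + rr • v i) (b := (0:ℝ)) hGmax' htend
      have hdh : ∀ rr : ℝ, DifferentiableAt ℝ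
          (fun rr' : ℝ => Fk k (p k + rr' • v i) - ψ (p k + rr' • v i)) rr :=
        fun rr => (hdu rr).differentiableAt.sub (h2ψ (p k) i rr).differentiableAt
      have hderivh : deriv (fun rr : ℝ => Fk k (p k + rr • v i) - ψ (p k + rr • v i))
          = fun rr => fderiv ℝ (Fk k) (p k + rr • v i) (v i) - W i (p k + rr • v i) := by
        funext rr
        rw [deriv_fun_sub (hdu rr).differentiableAt (h2ψ (p k) i rr).differentiableAt,
          (hdu rr).deriv, (h2ψ (p k) i rr).deriv]
      have hdh2 : DifferentiableAt ℝ
          (deriv (fun rr : ℝ => Fk k (p k + rr • v i) - ψ (p k + rr • v i))) 0 := by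
        rw [hderivh]
        exact hdWF.sub hdWψ
      have hkey := second_deriv_nonpos_of_isLocalMax hdh hdh2 hlmax
      rw [hderivh] at hkey
      have hsplit : deriv (fun rr : ℝ =>
          fderiv ℝ (Fk k) (p k + rr • v i) (v i) - W i (p k + rr • v i)) 0
          = deriv (fun rr : ℝ => fderiv ℝ (Fk k) (p k + rr • v i) (v i)) 0
            - deriv (fun rr : ℝ => W i (p k + rr • v i)) 0 :=
        deriv_sub hdWF hdWψ
      rw [hsplit] at hkey
      have hw2 : deriv (fun rr : ℝ => W i (p k + rr • v i)) 0
          = fderiv ℝ (fun q' => fderiv ℝ ψ q' (v i)) (p k) (v i) := by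
        have := (h2ψ' (p k) i 0).deriv
        simpa using this
      rw [hueq, hderivu, hw2.symm]
      linarith
    -- assemble via hsub
    obtain ⟨hineq, _⟩ := hsub k (p k).1 (p k).2 hpU1
    rw [htderiv, hgrad] at hineq
    refine hineq.trans ?_
    apply mul_le_mul_of_nonneg_left _ hC₀
    apply Real.sqrt_le_sqrt
    apply mul_le_mul_of_nonneg_left _ (by positivity : (0:ℝ) ≤ (k : ℝ)⁻¹)
    rw [hSdef]
    exact Finset.sum_le_sum fun i _ => hsecond i
  -- pass to the limit
  have hlim1 : Tendsto (fun k => A (p k) - H (Gr (p k))) atTop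
      (𝓝 (A (t, x) - H (Gr (t, x)))) :=
    ((hA.tendsto _).comp hp).sub ((hH.tendsto _).comp ((hGr.tendsto _).comp hp))
  have hlim2 : Tendsto (fun k : ℕ => C₀ * Real.sqrt ((k : ℝ)⁻¹ * S (p k))) atTop (𝓝 0) := by
    have h1 : Tendsto (fun k : ℕ => (k : ℝ)⁻¹ * S (p k)) atTop (𝓝 (0 * S (t, x))) :=
      tendsto_inv_atTop_nhds_zero_nat.mul ((hS.tendsto _).comp hp)
    rw [zero_mul] at h1
    have h2 : Tendsto (fun k : ℕ => Real.sqrt ((k : ℝ)⁻¹ * S (p k))) atTop (𝓝 0) := by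
      have h3 := (Real.continuous_sqrt.tendsto 0).comp h1
      rw [Real.sqrt_zero] at h3
      exact h3
    have := h2.const_mul C₀
    simpa using this
  have hfinal : A (t, x) - H (Gr (t, x)) ≤ 0 :=
    le_of_tendsto_of_tendsto hlim1 hlim2 hev
  -- identify the limit quantities with the φ quantities
  have hAtx : A ((t, x) : ℝ × EuclideanSpace ℝ (Fin n)) = deriv (fun s => φ (s, x)) t := by
    have hφdiff : DifferentiableAt ℝ (fun s : ℝ => φ (s, x)) t := by
      have := ((hφ.differentiable (by simp : ((⊤ : ℕ∞) : WithTop ℕ∞) ≠ 0)).comp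
        ((differentiable_id (𝕜 := ℝ)).prodMk (differentiable_const x))).differentiableAt
        (x := t)
      exact this
    have hquad : HasDerivAt (fun s : ℝ => (s - t) ^ 2 + ‖x - x‖ ^ 2) 0 t := by
      have h := (((hasDerivAt_id t).sub_const t).pow 2).add_const (‖x - x‖ ^ 2)
      simpa using h
    have hψx : HasDerivAt (fun s => ψ (s, x))
        (deriv (fun s => φ (s, x)) t + 0) t :=
      hφdiff.hasDerivAt.add hquad
    have h2 := h1ψ ((t, x) : ℝ × EuclideanSpace ℝ (Fin n))
    have h3 : A ((t, x) : ℝ × EuclideanSpace ℝ (Fin n)) = deriv (fun s => φ (s, x)) t + 0 := by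
      have h2' : HasDerivAt (fun s => ψ (s, x)) (A ((t, x) : ℝ × EuclideanSpace ℝ (Fin n))) t := h2
      exact h2'.unique hψx
    rw [h3, add_zero]
  have hGrtx : Gr ((t, x) : ℝ × EuclideanSpace ℝ (Fin n)) = gradient (fun z => φ (t, z)) x := by
    rw [← hgradψ ((t, x) : ℝ × EuclideanSpace ℝ (Fin n))]
    show gradient (fun z => ψ (t, z)) x = gradient (fun z => φ (t, z)) x
    unfold gradient
    congr 1
    have hnormsq : DifferentiableAt ℝ (fun z : EuclideanSpace ℝ (Fin n) => (t - t) ^ 2 + ‖z - x‖ ^ 2) x := by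
      apply (differentiableAt_const _).add
      exact (((contDiff_norm_sq ℝ (E := EuclideanSpace ℝ (Fin n))).comp
        (contDiff_id.sub contDiff_const)).differentiable (by simp : (⊤ : WithTop ℕ∞) ≠ 0)).differentiableAt
    have hφzdiff : DifferentiableAt ℝ (fun z : EuclideanSpace ℝ (Fin n) => φ (t, z)) x :=
      ((hφ.differentiable (by simp : ((⊤ : ℕ∞) : WithTop ℕ∞) ≠ 0)).comp
        ((differentiable_const t).prodMk differentiable_id)).differentiableAt
    have hmin : IsLocalMin (fun z : EuclideanSpace ℝ (Fin n) => (t - t) ^ 2 + ‖z - x‖ ^ 2) x := by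
      apply IsMinOn.isLocalMin (s := Set.univ)
      · intro z _
        show (t - t) ^ 2 + ‖x - x‖ ^ 2 ≤ (t - t) ^ 2 + ‖z - x‖ ^ 2
        simp [sub_self]
      · exact Filter.univ_mem
    have hz : fderiv ℝ (fun z : EuclideanSpace ℝ (Fin n) => (t - t) ^ 2 + ‖z - x‖ ^ 2) x = 0 :=
      hmin.fderiv_eq_zero
    have : fderiv ℝ (fun z => ψ (t, z)) x
        = fderiv ℝ (fun z : EuclideanSpace ℝ (Fin n) => φ (t, z)) x
          + fderiv ℝ (fun z : EuclideanSpace ℝ (Fin n) => (t - t) ^ 2 + ‖z - x‖ ^ 2) x := by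
      exact fderiv_add hφzdiff hnormsq
    rw [this, hz, add_zero]
  rw [← hAtx, ← hGrtx]
  exact hfinal
end

section
/- Let (Ω, P) be a probability space and let A ≥ 0, δ ≥ 0. Let φ : Ω × [0,3] → ℝ be such that for P-almost every ω the function φ(ω,·) is convex and differentiable on [0,3], and such that (ω,s) ↦ ∂_s φ(ω,s) is measurable and integrable. Let ψ : [0,3] → ℝ be convex and differentiable with |ψ'(s)| ≤ A for every s ∈ [0,3], and suppose E|φ(·,s) − ψ(s)| ≤ δ for every s ∈ [0,3]. Then for every y ∈ (0,1]: ∫₁² E| ∂_s φ(·,s) − ψ'(s) | ds ≤ 4Ay + 3δ/y. -/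
open MeasureTheory

/-- Let `(Ω, P)` be a probability space and `A, δ ≥ 0`. Suppose that for
`P`-almost every `ω` the map `s ↦ φ(ω,s)` is convex on `[0,3]` and has
derivative `φ'(ω,s)` at every `s ∈ [0,3]` (one-sided at the endpoints), that
`(ω,s) ↦ φ'(ω,s)` is measurable and integrable on `Ω × [0,3]`, that `ψ` is
convex on `[0,3]` with derivative `ψ'` bounded by `A` there, and that
`E|φ(·,s) − ψ(s)| ≤ δ` for every `s ∈ [0,3]`. Then for every `y ∈ (0,1]`:
`∫₁² E|φ'(·,s) − ψ'(s)| ds ≤ 4Ay + 3δ/y`. -/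
theorem derivative_comparison_convex {Ω : Type*} [MeasurableSpace Ω]
    (P : Measure Ω) [IsProbabilityMeasure P]
    (A δ : ℝ) (hA : 0 ≤ A) (hδ : 0 ≤ δ)
    (φ φ' : Ω → ℝ → ℝ) (ψ ψ' : ℝ → ℝ)
    (hφ : ∀ᵐ ω ∂P, ConvexOn ℝ (Set.Icc 0 3) (φ ω)
      ∧ ∀ s ∈ Set.Icc (0 : ℝ) 3, HasDerivWithinAt (φ ω) (φ' ω s) (Set.Icc 0 3) s)
    (hφ'meas : Measurable (Function.uncurry φ'))
    (hφ'int : Integrable (Function.uncurry φ')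
      (P.prod (volume.restrict (Set.Icc (0 : ℝ) 3))))
    (hψconv : ConvexOn ℝ (Set.Icc 0 3) ψ)
    (hψd : ∀ s ∈ Set.Icc (0 : ℝ) 3, HasDerivWithinAt ψ (ψ' s) (Set.Icc 0 3) s)
    (hψ'bdd : ∀ s ∈ Set.Icc (0 : ℝ) 3, |ψ' s| ≤ A)
    (hint : ∀ s ∈ Set.Icc (0 : ℝ) 3, Integrable (fun ω => φ ω s) P)
    (hclose : ∀ s ∈ Set.Icc (0 : ℝ) 3, ∫ ω, |φ ω s - ψ s| ∂P ≤ δ) :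
    ∀ y ∈ Set.Ioc (0 : ℝ) 1,
      (∫ s in (1 : ℝ)..2, ∫ ω, |φ' ω s - ψ' s| ∂P) ≤ 4 * A * y + 3 * δ / y := by
  intro y hy
  obtain ⟨hy0, hy1⟩ := hy
  -- monotonicity of ψ' on [0,3]
  have hmono : ∀ a ∈ Set.Icc (0:ℝ) 3, ∀ b ∈ Set.Icc (0:ℝ) 3, a ≤ b → ψ' a ≤ ψ' b := by
    intro a ha b hb hab
    rcases eq_or_lt_of_le hab with rfl | hlt
    · exact le_rfl
    · exact (hψconv.le_slope_of_hasDerivWithinAt ha hb hlt (hψd a ha)).trans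
        (hψconv.slope_le_of_hasDerivWithinAt ha hb hlt (hψd b hb))
  -- projection onto [0,3] and the extended (monotone, bounded) derivative Ψ
  set π : ℝ → ℝ := fun t => max 0 (min 3 t) with hπ
  have hπmem : ∀ t, π t ∈ Set.Icc (0:ℝ) 3 :=
    fun t => ⟨le_max_left _ _, max_le (by norm_num) (min_le_left _ _)⟩
  have hπeq : ∀ t ∈ Set.Icc (0:ℝ) 3, π t = t := by
    intro t ht
    simp only [hπ]
    rw [min_eq_right ht.2, max_eq_right ht.1]
  set Ψ : ℝ → ℝ := fun t => ψ' (π t) with hΨ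
  have hΨmono : Monotone Ψ := by
    intro t u htu
    exact hmono _ (hπmem t) _ (hπmem u)
      (max_le_max le_rfl (min_le_min le_rfl htu))
  have hΨbdd : ∀ t, |Ψ t| ≤ A := fun t => hψ'bdd _ (hπmem t)
  have hΨeq : ∀ t ∈ Set.Icc (0:ℝ) 3, Ψ t = ψ' t := by
    intro t ht
    simp only [hΨ]
    rw [hπeq t ht]
  -- finiteness of the restricted measure
  haveI : IsFiniteMeasure (volume.restrict (Set.Icc (0:ℝ) 3)) :=
    ⟨by rw [Measure.restrict_apply_univ]; exact measure_Icc_lt_top⟩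
  -- integrability on the product
  have hΨint : Integrable (fun p : Ω × ℝ => Ψ p.2)
      (P.prod (volume.restrict (Set.Icc (0:ℝ) 3))) := by
    refine Integrable.mono' (integrable_const A)
      ((hΨmono.measurable.comp measurable_snd).aestronglyMeasurable) ?_
    exact Filter.Eventually.of_forall fun p => by
      simpa using hΨbdd p.2
  have hF : Integrable (fun p : Ω × ℝ => |φ' p.1 p.2 - Ψ p.2|)
      (P.prod (volume.restrict (Set.Icc (0:ℝ) 3))) := (hφ'int.sub hΨint).abs
  set h : ℝ → ℝ := fun s => ∫ ω, |φ' ω s - Ψ s| ∂P with hh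
  have h_int : Integrable h (volume.restrict (Set.Icc (0:ℝ) 3)) := hF.integral_prod_right
  have hslice : ∀ᵐ s ∂(volume.restrict (Set.Icc (0:ℝ) 3)), Integrable (fun ω => φ' ω s) P :=
    hφ'int.prod_left_ae
  set G : ℝ → ℝ := fun s => (Ψ (s + y) - Ψ (s - y)) + 3 * δ / y with hG
  -- the key pointwise (in s) estimate
  have key : ∀ s ∈ Set.Icc (1:ℝ) 2, Integrable (fun ω => φ' ω s) P → h s ≤ G s := by
    intro s hs hsl
    obtain ⟨hs1, hs2⟩ := hs
    have hma : s - y ∈ Set.Icc (0:ℝ) 3 := ⟨by linarith, by linarith⟩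
    have hms : s ∈ Set.Icc (0:ℝ) 3 := ⟨by linarith, by linarith⟩
    have hmb : s + y ∈ Set.Icc (0:ℝ) 3 := ⟨by linarith, by linarith⟩
    have hya : s - y < s := by linarith
    have hyb : s < s + y := by linarith
    have ia : Integrable (fun ω => |φ ω (s - y) - ψ (s - y)|) P :=
      ((hint _ hma).sub (integrable_const _)).abs
    have is' : Integrable (fun ω => |φ ω s - ψ s|) P :=
      ((hint _ hms).sub (integrable_const _)).abs
    have ib : Integrable (fun ω => |φ ω (s + y) - ψ (s + y)|) P :=
      ((hint _ hmb).sub (integrable_const _)).abs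
    have hBint : Integrable (fun ω => (ψ' (s + y) - ψ' (s - y)) +
        (|φ ω (s - y) - ψ (s - y)| + |φ ω s - ψ s| + |φ ω (s + y) - ψ (s + y)|) / y) P :=
      (integrable_const _).add (((ia.add is').add ib).div_const y)
    -- slope facts for ψ
    have f1 : ψ' s ≤ (ψ (s + y) - ψ s) / y := by
      have := hψconv.le_slope_of_hasDerivWithinAt hms hmb hyb (hψd s hms)
      rwa [slope_def_field, show s + y - s = y by ring] at this
    have f2 : (ψ s - ψ (s - y)) / y ≤ ψ' s := by
      have := hψconv.slope_le_of_hasDerivWithinAt hma hms hya (hψd s hms)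
      rwa [slope_def_field, show s - (s - y) = y by ring] at this
    have f3 : (ψ (s + y) - ψ s) / y ≤ ψ' (s + y) := by
      have := hψconv.slope_le_of_hasDerivWithinAt hms hmb hyb (hψd (s + y) hmb)
      rwa [slope_def_field, show s + y - s = y by ring] at this
    have f4 : ψ' (s - y) ≤ (ψ s - ψ (s - y)) / y := by
      have := hψconv.le_slope_of_hasDerivWithinAt hma hms hya (hψd (s - y) hma)
      rwa [slope_def_field, show s - (s - y) = y by ring] at this
    have hptwise : ∀ᵐ ω ∂P, |φ' ω s - ψ' s| ≤ (ψ' (s + y) - ψ' (s - y)) +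
        (|φ ω (s - y) - ψ (s - y)| + |φ ω s - ψ s| + |φ ω (s + y) - ψ (s + y)|) / y := by
      filter_upwards [hφ] with ω hω
      obtain ⟨hconv, hder⟩ := hω
      have e1 : φ' ω s ≤ (φ ω (s + y) - φ ω s) / y := by
        have := hconv.le_slope_of_hasDerivWithinAt hms hmb hyb (hder s hms)
        rwa [slope_def_field, show s + y - s = y by ring] at this
      have e2 : (φ ω s - φ ω (s - y)) / y ≤ φ' ω s := by
        have := hconv.slope_le_of_hasDerivWithinAt hma hms hya (hder s hms)
        rwa [slope_def_field, show s - (s - y) = y by ring] at this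
      have n1 : (φ ω (s + y) - φ ω s) / y ≤
          (|φ ω (s + y) - ψ (s + y)| + |φ ω s - ψ s| + (ψ (s + y) - ψ s)) / y := by
        gcongr
        have u1 := le_abs_self (φ ω (s + y) - ψ (s + y))
        have u2 := neg_abs_le (φ ω s - ψ s)
        linarith
      have n2 : (-(|φ ω s - ψ s| + |φ ω (s - y) - ψ (s - y)|) + (ψ s - ψ (s - y))) / y ≤
          (φ ω s - φ ω (s - y)) / y := by
        gcongr
        have u1 := neg_abs_le (φ ω s - ψ s)
        have u2 := le_abs_self (φ ω (s - y) - ψ (s - y))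
        linarith
      have E1 : (|φ ω (s + y) - ψ (s + y)| + |φ ω s - ψ s| + (ψ (s + y) - ψ s)) / y
          = |φ ω (s + y) - ψ (s + y)| / y + |φ ω s - ψ s| / y + (ψ (s + y) - ψ s) / y := by
        ring
      have E2 : (-(|φ ω s - ψ s| + |φ ω (s - y) - ψ (s - y)|) + (ψ s - ψ (s - y))) / y
          = -(|φ ω s - ψ s| / y) - |φ ω (s - y) - ψ (s - y)| / y + (ψ s - ψ (s - y)) / y := by
        ring
      have E3 : (|φ ω (s - y) - ψ (s - y)| + |φ ω s - ψ s| + |φ ω (s + y) - ψ (s + y)|) / y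
          = |φ ω (s - y) - ψ (s - y)| / y + |φ ω s - ψ s| / y + |φ ω (s + y) - ψ (s + y)| / y := by
        ring
      have pa : (0:ℝ) ≤ |φ ω (s - y) - ψ (s - y)| / y := div_nonneg (abs_nonneg _) hy0.le
      have pb : (0:ℝ) ≤ |φ ω (s + y) - ψ (s + y)| / y := div_nonneg (abs_nonneg _) hy0.le
      rw [abs_le]
      constructor
      · rw [E3]
        rw [E2] at n2
        linarith
      · rw [E3]
        rw [E1] at n1
        linarith
    have h1 : h s ≤ ∫ ω, ((ψ' (s + y) - ψ' (s - y)) +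
        (|φ ω (s - y) - ψ (s - y)| + |φ ω s - ψ s| + |φ ω (s + y) - ψ (s + y)|) / y) ∂P := by
      have hΨs : Ψ s = ψ' s := hΨeq s hms
      simp only [hh]
      rw [hΨs]
      exact integral_mono_ae ((hsl.sub (integrable_const _)).abs) hBint hptwise
    have h2 : ∫ ω, ((ψ' (s + y) - ψ' (s - y)) +
        (|φ ω (s - y) - ψ (s - y)| + |φ ω s - ψ s| + |φ ω (s + y) - ψ (s + y)|) / y) ∂P
        ≤ (ψ' (s + y) - ψ' (s - y)) + 3 * δ / y := by
      have iB : Integrable (fun ω => (|φ ω (s - y) - ψ (s - y)| + |φ ω s - ψ s|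
          + |φ ω (s + y) - ψ (s + y)|) / y) P := ((ia.add is').add ib).div_const y
      have iAB : Integrable (fun ω => |φ ω (s - y) - ψ (s - y)| + |φ ω s - ψ s|) P := ia.add is'
      rw [integral_add (integrable_const _) iB, integral_const]
      simp only [measure_univ, ENNReal.toReal_one, probReal_univ, one_smul, smul_eq_mul, one_mul]
      have heq : ∫ ω, (|φ ω (s - y) - ψ (s - y)| + |φ ω s - ψ s| + |φ ω (s + y) - ψ (s + y)|) / y ∂P
          = (∫ ω, (|φ ω (s - y) - ψ (s - y)| + |φ ω s - ψ s| + |φ ω (s + y) - ψ (s + y)|) ∂P) / y :=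
        integral_div y _
      rw [heq, integral_add iAB ib, integral_add ia is']
      have c1 := hclose _ hma
      have c2 := hclose _ hms
      have c3 := hclose _ hmb
      have hq : (∫ ω, |φ ω (s - y) - ψ (s - y)| ∂P + ∫ ω, |φ ω s - ψ s| ∂P
          + ∫ ω, |φ ω (s + y) - ψ (s + y)| ∂P) / y ≤ (3 * δ) / y := by
        gcongr
        linarith
      linarith
    refine (h1.trans h2).trans_eq ?_
    simp only [hG]
    rw [hΨeq _ hmb, hΨeq _ hma]
  -- a.e. comparison on [1,2]
  have hae : h ≤ᵐ[volume.restrict (Set.Icc (1:ℝ) 2)] G := by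
    have h1 : ∀ᵐ s ∂(volume.restrict (Set.Icc (1:ℝ) 2)), Integrable (fun ω => φ' ω s) P :=
      ae_restrict_of_ae_restrict_of_subset
        (Set.Icc_subset_Icc (by norm_num) (by norm_num)) hslice
    filter_upwards [h1, ae_restrict_mem measurableSet_Icc] with s hsl hs
    exact key s hs hsl
  -- interval integrabilities
  have h_ii : IntervalIntegrable h volume 1 2 := by
    have hio : IntegrableOn h (Set.uIcc (1:ℝ) 2) volume := by
      rw [Set.uIcc_of_le (by norm_num : (1:ℝ) ≤ 2)]
      exact h_int.mono_measure
        (Measure.restrict_mono (Set.Icc_subset_Icc (by norm_num) (by norm_num)) le_rfl)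
    exact hio.intervalIntegrable
  have m1 : Monotone fun s => Ψ (s + y) := fun t u htu => hΨmono (by linarith)
  have m2 : Monotone fun s => Ψ (s - y) := fun t u htu => hΨmono (by linarith)
  have G_ii : IntervalIntegrable G volume 1 2 := by
    exact ((m1.intervalIntegrable).sub (m2.intervalIntegrable)).add intervalIntegrable_const
  have main : (∫ s in (1:ℝ)..2, h s) ≤ ∫ s in (1:ℝ)..2, G s :=
    intervalIntegral.integral_mono_ae_restrict (by norm_num) h_ii G_ii hae
  -- the goal's integrand equals h on [1,2]
  have goal_eq : (∫ s in (1:ℝ)..2, ∫ ω, |φ' ω s - ψ' s| ∂P) = ∫ s in (1:ℝ)..2, h s := by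
    apply intervalIntegral.integral_congr
    intro s hs
    rw [Set.uIcc_of_le (by norm_num : (1:ℝ) ≤ 2)] at hs
    have hΨs : Ψ s = ψ' s := hΨeq s ⟨by linarith [hs.1], by linarith [hs.2]⟩
    simp only [hh]
    rw [hΨs]
  -- FTC for ψ' on subintervals of [0,3]
  have hψcont : ContinuousOn ψ (Set.Icc 0 3) := fun t ht => (hψd t ht).continuousWithinAt
  have ftc : ∀ c d : ℝ, 0 ≤ c → c ≤ d → d ≤ 3 → (∫ t in c..d, ψ' t) = ψ d - ψ c := by
    intro c d hc hcd hd
    refine intervalIntegral.integral_eq_sub_of_hasDeriv_right_of_le hcd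
      (hψcont.mono (Set.Icc_subset_Icc hc hd)) (fun x hx => ?_) ?_
    · have hx03 : x ∈ Set.Ioo (0:ℝ) 3 := ⟨lt_of_le_of_lt hc hx.1, lt_of_lt_of_le hx.2 hd⟩
      exact ((hψd x (Set.Ioo_subset_Icc_self hx03)).hasDerivAt
        (Icc_mem_nhds hx03.1 hx03.2)).hasDerivWithinAt
    · apply MonotoneOn.intervalIntegrable
      rw [Set.uIcc_of_le hcd]
      intro u hu v hv huv
      exact hmono u ⟨le_trans hc hu.1, le_trans hu.2 hd⟩
        v ⟨le_trans hc hv.1, le_trans hv.2 hd⟩ huv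
  -- compute ∫ G
  have hint_plus : (∫ s in (1:ℝ)..2, Ψ (s + y)) = ψ (2 + y) - ψ (1 + y) := by
    rw [intervalIntegral.integral_comp_add_right (fun t => Ψ t) y]
    have hcg : (∫ t in (1+y)..(2+y), Ψ t) = ∫ t in (1+y)..(2+y), ψ' t := by
      apply intervalIntegral.integral_congr
      intro t ht
      rw [Set.uIcc_of_le (by linarith : (1:ℝ)+y ≤ 2+y)] at ht
      exact hΨeq t ⟨by linarith [ht.1], by linarith [ht.2]⟩
    rw [hcg, ftc (1+y) (2+y) (by linarith) (by linarith) (by linarith)]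
  have hint_minus : (∫ s in (1:ℝ)..2, Ψ (s - y)) = ψ (2 - y) - ψ (1 - y) := by
    rw [intervalIntegral.integral_comp_sub_right (fun t => Ψ t) y]
    have hcg : (∫ t in (1-y)..(2-y), Ψ t) = ∫ t in (1-y)..(2-y), ψ' t := by
      apply intervalIntegral.integral_congr
      intro t ht
      rw [Set.uIcc_of_le (by linarith : (1:ℝ)-y ≤ 2-y)] at ht
      exact hΨeq t ⟨by linarith [ht.1], by linarith [ht.2]⟩
    rw [hcg, ftc (1-y) (2-y) (by linarith) (by linarith) (by linarith)]
  have hGval : (∫ s in (1:ℝ)..2, G s)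
      = (ψ (2+y) - ψ (1+y)) - (ψ (2-y) - ψ (1-y)) + 3 * δ / y := by
    simp only [hG]
    rw [intervalIntegral.integral_add ((m1.intervalIntegrable).sub m2.intervalIntegrable)
        intervalIntegrable_const,
      intervalIntegral.integral_sub m1.intervalIntegrable m2.intervalIntegrable,
      hint_plus, hint_minus, intervalIntegral.integral_const]
    norm_num
  -- endpoint bounds
  have mem2m : (2:ℝ) - y ∈ Set.Icc (0:ℝ) 3 := ⟨by linarith, by linarith⟩
  have mem2p : (2:ℝ) + y ∈ Set.Icc (0:ℝ) 3 := ⟨by linarith, by linarith⟩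
  have mem1m : (1:ℝ) - y ∈ Set.Icc (0:ℝ) 3 := ⟨by linarith, by linarith⟩
  have mem1p : (1:ℝ) + y ∈ Set.Icc (0:ℝ) 3 := ⟨by linarith, by linarith⟩
  have bd_top : ψ (2 + y) - ψ (2 - y) ≤ A * (2 * y) := by
    have h1 := hψconv.slope_le_of_hasDerivWithinAt mem2m mem2p (by linarith) (hψd _ mem2p)
    rw [slope_def_field, show (2:ℝ) + y - (2 - y) = 2*y by ring] at h1
    have h2 : ψ' (2+y) ≤ A := (abs_le.mp (hψ'bdd _ mem2p)).2
    have h3 := (div_le_iff₀ (by linarith : (0:ℝ) < 2*y)).mp (h1.trans h2)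
    linarith
  have bd_bot : -(A * (2 * y)) ≤ ψ (1 + y) - ψ (1 - y) := by
    have h1 := hψconv.le_slope_of_hasDerivWithinAt mem1m mem1p (by linarith) (hψd _ mem1m)
    rw [slope_def_field, show (1:ℝ) + y - (1 - y) = 2*y by ring] at h1
    have h2 : -A ≤ ψ' (1-y) := (abs_le.mp (hψ'bdd _ mem1m)).1
    have h3 := (le_div_iff₀ (by linarith : (0:ℝ) < 2*y)).mp (h2.trans h1)
    linarith
  rw [goal_eq]
  calc (∫ s in (1:ℝ)..2, h s) ≤ ∫ s in (1:ℝ)..2, G s := main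
    _ = (ψ (2+y) - ψ (1+y)) - (ψ (2-y) - ψ (1-y)) + 3 * δ / y := hGval
    _ ≤ 4 * A * y + 3 * δ / y := by linarith
end
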